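/- For distinct nonempty faces F ≠ F' of Y⁰, the relative interior of S_F is disjoint from S_{F'}: ri S_F ∩ S_{F'} = ∅. -/

import Mathlib

open Set

noncomputable section

variable {m n : ℕ}

/-- Euclidean distance between two vectors. -/
def en {k : ℕ} (x x' : Fin k → ℝ) : ℝ := Real.sqrt (∑ i, (x i - x' i) ^ 2)

/-- The ℓ₁ norm. -/
def l1 {k : ℕ} (x : Fin k → ℝ) : ℝ := ∑ i, |x i|

/-- Squared Euclidean norm. -/
def sqnorm {k : ℕ} (y : Fin k → ℝ) : ℝ := ∑ i, (y i) ^ 2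

/-- `A_iᵀ y`, the dot product of the `i`-th column of `A` with `y`. -/
def colDot (A : Matrix (Fin m) (Fin n) ℝ) (i : Fin n) (y : Fin m → ℝ) : ℝ := ∑ k, A k i * y k

/-- The dual feasible set `Y⁰ = {y : ‖Aᵀy‖_∞ ≤ 1}`. -/
def Ydual (A : Matrix (Fin m) (Fin n) ℝ) : Set (Fin m → ℝ) := {y | ∀ i, |colDot A i y| ≤ 1}

/-- `F` is a face of `C`: the argmax set of a linear functional over `C`. -/
def IsFaceOf (C F : Set (Fin m → ℝ)) : Prop :=
  ∃ v : Fin m → ℝ, F = {y | y ∈ C ∧ ∀ z ∈ C, ∑ k, v k * z k ≤ ∑ k, v k * y k}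

/-- `𝒜⁺(F)`. -/
def Aplus (A : Matrix (Fin m) (Fin n) ℝ) (F : Set (Fin m → ℝ)) : Set (Fin n) :=
  {i | ∀ y ∈ F, colDot A i y = 1}

/-- `𝒜⁻(F)`. -/
def Aminus (A : Matrix (Fin m) (Fin n) ℝ) (F : Set (Fin m → ℝ)) : Set (Fin n) :=
  {i | ∀ y ∈ F, colDot A i y = -1}

/-- `𝒜⁰(F)`. -/
def Azero (A : Matrix (Fin m) (Fin n) ℝ) (F : Set (Fin m → ℝ)) : Set (Fin n) :=
  {i | ∃ y ∈ F, -1 < colDot A i y ∧ colDot A i y < 1}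

/-- Solution set of the extended ℓ₁ regularization problem:
basis pursuit when `lam = 0`, Lasso-type problem when `lam > 0`. -/
def Sol (A : Matrix (Fin m) (Fin n) ℝ) (lam : ℝ) (b : Fin m → ℝ) : Set (Fin n → ℝ) :=
  if lam = 0 then
    {x | A.mulVec x = b ∧ ∀ z, A.mulVec z = b → l1 x ≤ l1 z}
  else
    {x | ∀ z, l1 x + 1 / (2 * lam) * sqnorm (A.mulVec x - b) ≤
          l1 z + 1 / (2 * lam) * sqnorm (A.mulVec z - b)}

/-- Graph of the solution multifunction `S`. -/
def gphS (A : Matrix (Fin m) (Fin n) ℝ) : Set (ℝ × (Fin m → ℝ) × (Fin n → ℝ)) :=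
  {p | 0 ≤ p.1 ∧ p.2.2 ∈ Sol A p.1 p.2.1}

/-- `A_iᵀ(b − Ax)`. -/
def resid (A : Matrix (Fin m) (Fin n) ℝ) (b : Fin m → ℝ) (x : Fin n → ℝ) (i : Fin n) : ℝ :=
  colDot A i (b - A.mulVec x)

/-- The polyhedral cone `S_F` associated with a face `F` of `Y⁰`. -/
def SFace (A : Matrix (Fin m) (Fin n) ℝ) (F : Set (Fin m → ℝ)) :
    Set (ℝ × (Fin m → ℝ) × (Fin n → ℝ)) :=
  {p | 0 ≤ p.1 ∧
    (∀ i ∈ Aplus A F, 0 ≤ p.2.2 i ∧ resid A p.2.1 p.2.2 i = p.1) ∧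
    (∀ i ∈ Azero A F, p.2.2 i = 0 ∧ |resid A p.2.1 p.2.2 i| ≤ p.1) ∧
    (∀ i ∈ Aminus A F, p.2.2 i ≤ 0 ∧ resid A p.2.1 p.2.2 i = -p.1)}

/-- `cl W(I⁺, I⁰, I⁻)`. -/
def clW (Ip I0 Im : Set (Fin n)) : Set (Fin n → ℝ) :=
  {x | (∀ i ∈ Ip, 0 ≤ x i) ∧ (∀ i ∈ I0, x i = 0) ∧ (∀ i ∈ Im, x i ≤ 0)}

/-- `W(I⁺, I⁰, I⁻)`. -/
def Wset (Ip I0 Im : Set (Fin n)) : Set (Fin n → ℝ) :=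
  {x | (∀ i ∈ Ip, 0 < x i) ∧ (∀ i ∈ I0, x i = 0) ∧ (∀ i ∈ Im, x i < 0)}

/-- The projection `D_F` of `S_F` onto the `(λ, b)` coordinates. -/
def DFace (A : Matrix (Fin m) (Fin n) ℝ) (F : Set (Fin m → ℝ)) : Set (ℝ × (Fin m → ℝ)) :=
  (fun p => (p.1, p.2.1)) '' SFace A F

/-- The convex subdifferential of the ℓ₁ norm. -/
def l1subdiff {k : ℕ} (x : Fin k → ℝ) : Set (Fin k → ℝ) :=
  {v | ∀ z, l1 x + ∑ i, v i * (z i - x i) ≤ l1 z}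

/-- Polyhedral subset of `ℝ × ℝ^m × ℝ^n`: a finite intersection of closed half-spaces. -/
def IsPolyhedral3 (s : Set (ℝ × (Fin m → ℝ) × (Fin n → ℝ))) : Prop :=
  ∃ (k : ℕ) (a : Fin k → ℝ × (Fin m → ℝ) × (Fin n → ℝ)) (β : Fin k → ℝ),
    s = {p | ∀ j, (a j).1 * p.1 + (∑ t, (a j).2.1 t * p.2.1 t) +
          (∑ t, (a j).2.2 t * p.2.2 t) ≤ β j}

/-- Lipschitz continuity of a set-valued map on a set `X`, with constant `κ`. -/
def LipOn {a b : ℕ} (G : (Fin a → ℝ) → Set (Fin b → ℝ)) (X : Set (Fin a → ℝ)) (κ : ℝ) : Prop :=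
  (∀ x ∈ X, (G x).Nonempty ∧ IsClosed (G x)) ∧
  ∀ x ∈ X, ∀ x' ∈ X, ∀ y' ∈ G x', ∃ y ∈ G x, en y' y ≤ κ * en x' x

end


section Aux

variable {m n : ℕ}

lemma colDot_add (A : Matrix (Fin m) (Fin n) ℝ) (i : Fin n) (y z : Fin m → ℝ) :
    colDot A i (y + z) = colDot A i y + colDot A i z := by
  simp [colDot, mul_add, Finset.sum_add_distrib]

lemma colDot_smul (A : Matrix (Fin m) (Fin n) ℝ) (i : Fin n) (t : ℝ) (y : Fin m → ℝ) :
    colDot A i (t • y) = t * colDot A i y := by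
  simp [colDot, Finset.mul_sum, mul_left_comm]

lemma colDot_sub (A : Matrix (Fin m) (Fin n) ℝ) (i : Fin n) (y z : Fin m → ℝ) :
    colDot A i (y - z) = colDot A i y - colDot A i z := by
  simp [colDot, mul_sub, Finset.sum_sub_distrib]

lemma colDot_sum (A : Matrix (Fin m) (Fin n) ℝ) (i : Fin n) {ι : Type*} (t : Finset ι)
    (f : ι → Fin m → ℝ) : colDot A i (∑ j ∈ t, f j) = ∑ j ∈ t, colDot A i (f j) := by
  simp only [colDot]
  rw [Finset.sum_comm]
  congr 1; ext k
  simp [Finset.mul_sum]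

lemma resid_affine (A : Matrix (Fin m) (Fin n) ℝ) (b b' : Fin m → ℝ) (x x' : Fin n → ℝ)
    (i : Fin n) (t : ℝ) :
    resid A (b + t • (b - b')) (x + t • (x - x')) i
      = resid A b x i + t * (resid A b x i - resid A b' x' i) := by
  simp only [resid, Matrix.mulVec_add, Matrix.mulVec_smul, Matrix.mulVec_sub]
  have : b + t • (b - b') - (A.mulVec x + t • (A.mulVec x - A.mulVec x'))
      = (b - A.mulVec x) + t • ((b - A.mulVec x) - (b' - A.mulVec x')) := by
    module
  rw [this]; simp only [colDot_add, colDot_smul, colDot_sub]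

lemma ri_push {E : Type*} [NormedAddCommGroup E] [NormedSpace ℝ E] {s : Set E} {p q : E}
    (hp : p ∈ intrinsicInterior ℝ s) (hq : q ∈ s) : ∃ t : ℝ, 0 < t ∧ p + t • (p - q) ∈ s := by
  obtain ⟨u, hu, hup⟩ := mem_intrinsicInterior.mp hp
  have hps : p ∈ s := intrinsicInterior_subset hp
  by_cases hpq : p = q
  · exact ⟨1, one_pos, by subst hpq; simpa using hq⟩
  obtain ⟨ε, hε, hball⟩ := Metric.mem_nhds_iff.mp (mem_interior_iff_mem_nhds.mp hu)
  have hpspan : p ∈ affineSpan ℝ s := by rw [← hup]; exact u.2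
  have hqspan : q ∈ affineSpan ℝ s := subset_affineSpan ℝ s hq
  have hnorm : (0:ℝ) < ‖p - q‖ := by
    simpa [sub_eq_zero] using norm_sub_pos_iff.mpr hpq
  set t := ε / (2 * ‖p - q‖) with ht
  have htpos : 0 < t := div_pos hε (by positivity)
  refine ⟨t, htpos, ?_⟩
  have hzspan : p + t • (p - q) ∈ affineSpan ℝ s := by
    have := AffineSubspace.smul_vsub_vadd_mem (affineSpan ℝ s) t hpspan hqspan hpspan
    simpa [vsub_eq_sub, vadd_eq_add, add_comm] using this
  have hdist : dist (⟨p + t • (p - q), hzspan⟩ : affineSpan ℝ s) u < ε := by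
    rw [Subtype.dist_eq, hup]
    simp only [dist_eq_norm, add_sub_cancel_left]
    rw [norm_smul, Real.norm_eq_abs, abs_of_pos htpos, ht]
    rw [div_mul_eq_mul_div, mul_comm]
    rw [div_lt_iff₀ (by positivity)]
    nlinarith
  have := hball hdist
  simpa using this

lemma strict_at_ri {E : Type*} [NormedAddCommGroup E] [NormedSpace ℝ E] {s : Set E} {p q : E}
    {f : E → ℝ} {c : ℝ}
    (hp : p ∈ intrinsicInterior ℝ s) (hq : q ∈ s)
    (hf : ∀ z ∈ s, f z ≤ c) (hfq : f q < c)
    (haff : ∀ t : ℝ, f (p + t • (p - q)) = f p + t * (f p - f q)) :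
    f p < c := by
  have hps : p ∈ s := intrinsicInterior_subset hp
  rcases lt_or_eq_of_le (hf p hps) with h | h
  · exact h
  · exfalso
    obtain ⟨t, htpos, hz⟩ := ri_push hp hq
    have := hf _ hz
    rw [haff t, h] at this
    nlinarith

lemma face_subset {C F : Set (Fin m → ℝ)} (h : IsFaceOf C F) : F ⊆ C := by
  obtain ⟨v, rfl⟩ := h; exact fun y hy => hy.1

lemma Ydual_convex (A : Matrix (Fin m) (Fin n) ℝ) : Convex ℝ (Ydual A) := by
  intro y hy z hz a b ha hb hab
  intro i
  have : colDot A i (a • y + b • z) = a * colDot A i y + b * colDot A i z := by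
    rw [colDot_add, colDot_smul, colDot_smul]
  rw [this]
  calc |a * colDot A i y + b * colDot A i z| ≤ |a * colDot A i y| + |b * colDot A i z| :=
        abs_add_le _ _
    _ ≤ a * 1 + b * 1 := by
        rw [abs_mul, abs_mul, abs_of_nonneg ha, abs_of_nonneg hb]
        exact add_le_add (by nlinarith [hy i, abs_nonneg (colDot A i y)])
          (by nlinarith [hz i, abs_nonneg (colDot A i z)])
    _ = 1 := by linarith

lemma face_convex {C F : Set (Fin m → ℝ)} (hC : Convex ℝ C) (h : IsFaceOf C F) :
    Convex ℝ F := by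
  obtain ⟨v, rfl⟩ := h
  intro y hy z hz a b ha hb hab
  refine ⟨hC hy.1 hz.1 ha hb hab, fun w hw => ?_⟩
  have h1 := hy.2 w hw
  have h2 := hz.2 w hw
  have : ∑ k, v k * (a • y + b • z) k = a * (∑ k, v k * y k) + b * (∑ k, v k * z k) := by
    rw [Finset.mul_sum, Finset.mul_sum, ← Finset.sum_add_distrib]
    apply Finset.sum_congr rfl; intro k _
    simp only [Pi.add_apply, Pi.smul_apply, smul_eq_mul]; ring
  rw [this]
  have h3 : a * (∑ k, v k * w k) + b * (∑ k, v k * w k) = ∑ k, v k * w k := by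
    rw [← add_mul, hab, one_mul]
  nlinarith [mul_le_mul_of_nonneg_left h1 ha, mul_le_mul_of_nonneg_left h2 hb]

lemma face_cover (A : Matrix (Fin m) (Fin n) ℝ) {F : Set (Fin m → ℝ)}
    (hface : IsFaceOf (Ydual A) F) (hne : F.Nonempty) (i : Fin n)
    (hp : i ∉ Aplus A F) (hm : i ∉ Aminus A F) : i ∈ Azero A F := by
  have hFY : F ⊆ Ydual A := face_subset hface
  have hconv : Convex ℝ F := face_convex (Ydual_convex A) hface
  simp only [Aplus, mem_setOf_eq, not_forall] at hp
  simp only [Aminus, mem_setOf_eq, not_forall] at hm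
  obtain ⟨y1, hy1F, hy1⟩ := hp
  obtain ⟨y2, hy2F, hy2⟩ := hm
  have hb1 := hFY hy1F i
  have hb2 := hFY hy2F i
  rw [abs_le] at hb1 hb2
  rcases lt_or_eq_of_le hb1.1 with h1 | h1
  · exact ⟨y1, hy1F, h1, lt_of_le_of_ne hb1.2 hy1⟩
  · rcases lt_or_eq_of_le hb2.2 with h2 | h2
    · exact ⟨y2, hy2F, lt_of_le_of_ne hb2.1 (fun h => hy2 h.symm), h2⟩
    · refine ⟨(1/2 : ℝ) • y1 + (1/2 : ℝ) • y2,
        hconv hy1F hy2F (by norm_num) (by norm_num) (by norm_num), ?_⟩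
      rw [colDot_add, colDot_smul, colDot_smul, ← h1, h2]
      norm_num

open Classical in
lemma strict_center (A : Matrix (Fin m) (Fin n) ℝ) {F : Set (Fin m → ℝ)}
    (hface : IsFaceOf (Ydual A) F) (hne : F.Nonempty) :
    ∃ yh ∈ F, ∀ i ∈ Azero A F, |colDot A i yh| < 1 := by
  classical
  have hconv : Convex ℝ F := face_convex (Ydual_convex A) hface
  have hFY : F ⊆ Ydual A := face_subset hface
  set Z : Finset (Fin n) := Finset.univ.filter (· ∈ Azero A F) with hZ
  rcases Finset.eq_empty_or_nonempty Z with hZe | hZne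
  · obtain ⟨y0, hy0⟩ := hne
    refine ⟨y0, hy0, fun i hi => ?_⟩
    exfalso
    have hmem : i ∈ Z := Finset.mem_filter.mpr ⟨Finset.mem_univ i, hi⟩
    rw [hZe] at hmem
    exact Finset.notMem_empty i hmem
  · have hw : ∀ i ∈ Z, ∃ y ∈ F, -1 < colDot A i y ∧ colDot A i y < 1 := by
      intro i hi
      exact (Finset.mem_filter.mp hi).2
    choose w hwF hw1 hw2 using hw
    set N : ℝ := (Z.card : ℝ) with hN
    have hNpos : 0 < N := by
      simp only [hN, Nat.cast_pos, Finset.card_pos]; exact hZne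
    set yh : Fin m → ℝ := ∑ i ∈ Z.attach, (1 / N) • w i.1 i.2 with hyh
    have hyhF : yh ∈ F := by
      rw [hyh]
      apply hconv.sum_mem (fun i _ => by positivity)
      · rw [Finset.sum_const, Finset.card_attach, nsmul_eq_mul, one_div]
        exact mul_inv_cancel₀ (ne_of_gt hNpos)
      · exact fun i _ => hwF i.1 i.2
    refine ⟨yh, hyhF, fun i hi => ?_⟩
    have hiZ : i ∈ Z := Finset.mem_filter.mpr ⟨Finset.mem_univ i, hi⟩
    have hcol : colDot A i yh = ∑ j ∈ Z.attach, (1 / N) * colDot A i (w j.1 j.2) := by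
      rw [hyh, colDot_sum]
      exact Finset.sum_congr rfl (fun j _ => colDot_smul A i _ _)
    rw [hcol]
    calc |∑ j ∈ Z.attach, (1 / N) * colDot A i (w j.1 j.2)|
        ≤ ∑ j ∈ Z.attach, |(1 / N) * colDot A i (w j.1 j.2)| :=
          Finset.abs_sum_le_sum_abs _ _
      _ < ∑ _j ∈ Z.attach, (1 / N) := by
          apply Finset.sum_lt_sum
          · intro j _
            rw [abs_mul, abs_of_pos (by positivity : (0:ℝ) < 1 / N)]
            have h1N : (0:ℝ) < 1 / N := by positivity
            have := hFY (hwF j.1 j.2) i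
            nlinarith [mul_le_mul_of_nonneg_left this h1N.le]
          · refine ⟨⟨i, hiZ⟩, Finset.mem_attach _ _, ?_⟩
            show |1 / N * colDot A i (w i hiZ)| < 1 / N
            rw [abs_mul, abs_of_pos (by positivity : (0:ℝ) < 1 / N)]
            have h1N : (0:ℝ) < 1 / N := by positivity
            have h3 : |colDot A i (w i hiZ)| < 1 := abs_lt.mpr ⟨hw1 i hiZ, hw2 i hiZ⟩
            nlinarith [mul_lt_mul_of_pos_left h3 h1N]
      _ = 1 := by
          rw [Finset.sum_const, nsmul_eq_mul, Finset.card_attach]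
          field_simp
          exact hN.symm

lemma face_eq_of_signs (A : Matrix (Fin m) (Fin n) ℝ) {F F' : Set (Fin m → ℝ)}
    (hface : IsFaceOf (Ydual A) F) (hne : F.Nonempty)
    (hface' : IsFaceOf (Ydual A) F') (hne' : F'.Nonempty)
    (hP : Aplus A F = Aplus A F') (hM : Aminus A F = Aminus A F') : F ⊆ F' := by
  classical
  intro y hyF
  have hFY : F ⊆ Ydual A := face_subset hface
  have hyY : y ∈ Ydual A := hFY hyF
  obtain ⟨yh, hyhF', hyhs⟩ := strict_center A hface' hne'
  have hyhY : yh ∈ Ydual A := (face_subset hface') hyhF'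
  have hvcopy := hface'
  obtain ⟨v, hv⟩ := hvcopy
  have key : ∃ t : ℝ, 0 < t ∧ yh + t • (yh - y) ∈ Ydual A := by
    classical
    set g : Fin n → ℝ := fun i => if i ∈ Azero A F' then (1 - |colDot A i yh|) / 3 else 1
    have hg : ∀ i, 0 < g i := by
      intro i
      by_cases hi : i ∈ Azero A F'
      · simp only [g, if_pos hi]
        have := hyhs i hi
        linarith
      · simp [g, hi]
    obtain ⟨t, ht0, ht1, htle⟩ : ∃ t : ℝ, 0 < t ∧ t ≤ 1 ∧ ∀ i, t ≤ g i := by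
      rcases isEmpty_or_nonempty (Fin n) with h | h
      · exact ⟨1, one_pos, le_refl 1, fun i => (IsEmpty.false i).elim⟩
      · obtain ⟨i0, hi0⟩ := Finset.exists_min_image Finset.univ g
          ⟨Classical.arbitrary (Fin n), Finset.mem_univ _⟩
        refine ⟨min 1 (g i0), lt_min one_pos (hg i0), min_le_left _ _, fun i => ?_⟩
        exact le_trans (min_le_right _ _) (hi0.2 i (Finset.mem_univ i))
    refine ⟨t, ht0, fun i => ?_⟩
    have hexp : colDot A i (yh + t • (yh - y)) = (1 + t) * colDot A i yh - t * colDot A i y := by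
      rw [colDot_add, colDot_smul, colDot_sub]; ring
    by_cases hiP : i ∈ Aplus A F'
    · rw [hexp, hiP yh hyhF']
      have hyi : colDot A i y = 1 := by
        rw [← hP] at hiP; exact hiP y hyF
      rw [hyi]; simp [abs_of_nonneg]
    · by_cases hiM : i ∈ Aminus A F'
      · rw [hexp, hiM yh hyhF']
        have hyi : colDot A i y = -1 := by
          rw [← hM] at hiM; exact hiM y hyF
        rw [hyi]
        norm_num [abs_of_nonpos]
      · have hiZ : i ∈ Azero A F' := face_cover A hface' hne' i hiP hiM
        rw [hexp]
        have ha : |colDot A i yh| < 1 := hyhs i hiZ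
        have hb : |colDot A i y| ≤ 1 := hyY i
        have htg : t ≤ (1 - |colDot A i yh|) / 3 := by
          have := htle i
          simpa [g, if_pos hiZ] using this
        calc |(1 + t) * colDot A i yh - t * colDot A i y|
            ≤ |(1 + t) * colDot A i yh| + |t * colDot A i y| := abs_sub _ _
          _ = (1 + t) * |colDot A i yh| + t * |colDot A i y| := by
              rw [abs_mul, abs_mul, abs_of_pos (by linarith : (0:ℝ) < 1 + t),
                abs_of_pos ht0]
          _ ≤ 1 := by nlinarith [abs_nonneg (colDot A i yh), abs_nonneg (colDot A i y)]
  obtain ⟨t, ht0, htY⟩ := key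
  rw [hv] at hyhF' ⊢
  refine ⟨hyY, fun z hz => ?_⟩
  have h1 := hyhF'.2 _ htY
  have h2 := hyhF'.2 z hz
  have hexp : ∑ k, v k * (yh + t • (yh - y)) k
      = (1 + t) * (∑ k, v k * yh k) - t * (∑ k, v k * y k) := by
    rw [Finset.mul_sum, Finset.mul_sum, ← Finset.sum_sub_distrib]
    apply Finset.sum_congr rfl; intro k _
    simp only [Pi.add_apply, Pi.smul_apply, Pi.sub_apply, smul_eq_mul]; ring
  rw [hexp] at h1
  have hyge : ∑ k, v k * yh k ≤ ∑ k, v k * y k := by nlinarith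
  linarith

lemma plus_not_zero {A : Matrix (Fin m) (Fin n) ℝ} {F : Set (Fin m → ℝ)} {i : Fin n}
    (hi : i ∈ Aplus A F) : i ∉ Azero A F := by
  rintro ⟨y, hy, h1, h2⟩
  have := hi y hy
  linarith

lemma minus_not_zero {A : Matrix (Fin m) (Fin n) ℝ} {F : Set (Fin m → ℝ)} {i : Fin n}
    (hi : i ∈ Aminus A F) : i ∉ Azero A F := by
  rintro ⟨y, hy, h1, h2⟩
  have := hi y hy
  linarith

lemma plus_not_minus {A : Matrix (Fin m) (Fin n) ℝ} {F : Set (Fin m → ℝ)} {i : Fin n}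
    (hne : F.Nonempty) (hi : i ∈ Aplus A F) : i ∉ Aminus A F := by
  intro hm
  obtain ⟨y, hy⟩ := hne
  have h1 := hi y hy
  have h2 := hm y hy
  linarith

lemma Hplus {A : Matrix (Fin m) (Fin n) ℝ} {F : Set (Fin m → ℝ)}
    (hface : IsFaceOf (Ydual A) F) (hne : F.Nonempty)
    {p : ℝ × (Fin m → ℝ) × (Fin n → ℝ)} {i : Fin n} (hi : i ∈ Aplus A F)
    (hp : p ∈ intrinsicInterior ℝ (SFace A F)) : 0 < p.2.2 i := by
  classical
  obtain ⟨y0, hy0⟩ := hne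
  have hFY : F ⊆ Ydual A := face_subset hface
  set x0 : Fin n → ℝ := fun j => if j = i then 1 else 0 with hx0
  set q : ℝ × (Fin m → ℝ) × (Fin n → ℝ) := (1, A.mulVec x0 + y0, x0) with hqdef
  have hres : ∀ j, resid A q.2.1 q.2.2 j = colDot A j y0 := by
    intro j
    have : A.mulVec x0 + y0 - A.mulVec x0 = y0 := by abel
    simp only [resid, hqdef, this]
  have hq : q ∈ SFace A F := by
    refine ⟨by norm_num, fun j hj => ?_, fun j hj => ?_, fun j hj => ?_⟩
    · refine ⟨?_, by rw [hres j, hj y0 hy0]⟩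
      show (0:ℝ) ≤ x0 j
      rw [hx0]; dsimp only; split <;> norm_num
    · have hji : j ≠ i := fun h => plus_not_zero hi (h ▸ hj)
      refine ⟨?_, ?_⟩
      · show x0 j = 0
        rw [hx0]; simp [hji]
      · rw [hres j]
        obtain ⟨y, hy, _, _⟩ := hj
        show |colDot A j y0| ≤ (1:ℝ)
        exact hFY hy0 j
    · have hji : j ≠ i := fun h => plus_not_minus ⟨y0, hy0⟩ hi (h ▸ hj)
      refine ⟨?_, by rw [hres j, hj y0 hy0]⟩
      show x0 j ≤ 0
      rw [hx0]; simp [hji]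
  have key : (fun r : ℝ × (Fin m → ℝ) × (Fin n → ℝ) => -(r.2.2 i)) p < 0 := by
    apply strict_at_ri hp hq
    · intro z hz
      have := (hz.2.1 i hi).1
      simp only [neg_nonpos]
      linarith
    · show -(x0 i) < 0
      rw [hx0]; simp
    · intro t
      show -(p.2.2 i + t * (p.2.2 i - q.2.2 i)) = _
      ring
  simpa using key

lemma Hminus {A : Matrix (Fin m) (Fin n) ℝ} {F : Set (Fin m → ℝ)}
    (hface : IsFaceOf (Ydual A) F) (hne : F.Nonempty)
    {p : ℝ × (Fin m → ℝ) × (Fin n → ℝ)} {i : Fin n} (hi : i ∈ Aminus A F)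
    (hp : p ∈ intrinsicInterior ℝ (SFace A F)) : p.2.2 i < 0 := by
  classical
  obtain ⟨y0, hy0⟩ := hne
  have hFY : F ⊆ Ydual A := face_subset hface
  set x0 : Fin n → ℝ := fun j => if j = i then -1 else 0 with hx0
  set q : ℝ × (Fin m → ℝ) × (Fin n → ℝ) := (1, A.mulVec x0 + y0, x0) with hqdef
  have hres : ∀ j, resid A q.2.1 q.2.2 j = colDot A j y0 := by
    intro j
    have : A.mulVec x0 + y0 - A.mulVec x0 = y0 := by abel
    simp only [resid, hqdef, this]
  have hq : q ∈ SFace A F := by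
    refine ⟨by norm_num, fun j hj => ?_, fun j hj => ?_, fun j hj => ?_⟩
    · have hji : j ≠ i := fun h => plus_not_minus ⟨y0, hy0⟩ hj (h ▸ hi)
      refine ⟨?_, by rw [hres j, hj y0 hy0]⟩
      show (0:ℝ) ≤ x0 j
      rw [hx0]; simp [hji]
    · have hji : j ≠ i := fun h => minus_not_zero hi (h ▸ hj)
      refine ⟨?_, ?_⟩
      · show x0 j = 0
        rw [hx0]; simp [hji]
      · rw [hres j]
        show |colDot A j y0| ≤ (1:ℝ)
        exact hFY hy0 j
    · refine ⟨?_, by rw [hres j, hj y0 hy0]⟩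
      show x0 j ≤ 0
      rw [hx0]; dsimp only; split <;> norm_num
  have key : (fun r : ℝ × (Fin m → ℝ) × (Fin n → ℝ) => r.2.2 i) p < 0 := by
    apply strict_at_ri hp hq
    · intro z hz
      exact (hz.2.2.2 i hi).1
    · show x0 i < 0
      rw [hx0]; simp
    · intro t
      show p.2.2 i + t * (p.2.2 i - q.2.2 i) = _
      ring
  simpa using key

lemma Hzero {A : Matrix (Fin m) (Fin n) ℝ} {F : Set (Fin m → ℝ)}
    (hface : IsFaceOf (Ydual A) F)
    {p : ℝ × (Fin m → ℝ) × (Fin n → ℝ)} {i : Fin n} (hi : i ∈ Azero A F)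
    (hp : p ∈ intrinsicInterior ℝ (SFace A F)) :
    |resid A p.2.1 p.2.2 i| < p.1 := by
  classical
  obtain ⟨yw, hywF, hw1, hw2⟩ := hi
  have hFY : F ⊆ Ydual A := face_subset hface
  set q : ℝ × (Fin m → ℝ) × (Fin n → ℝ) := (1, yw, 0) with hqdef
  have hres : ∀ j, resid A q.2.1 q.2.2 j = colDot A j yw := by
    intro j
    simp [resid, hqdef]
  have hq : q ∈ SFace A F := by
    refine ⟨by norm_num, fun j hj => ?_, fun j hj => ?_, fun j hj => ?_⟩
    · exact ⟨le_refl 0, by rw [hres j, hj yw hywF]⟩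
    · refine ⟨rfl, ?_⟩
      rw [hres j]
      show |colDot A j yw| ≤ (1:ℝ)
      exact hFY hywF j
    · exact ⟨le_refl 0, by rw [hres j, hj yw hywF]⟩
  have key1 : (fun r : ℝ × (Fin m → ℝ) × (Fin n → ℝ) =>
      resid A r.2.1 r.2.2 i - r.1) p < 0 := by
    apply strict_at_ri hp hq
    · intro z hz
      have := (hz.2.2.1 i ⟨yw, hywF, hw1, hw2⟩).2
      rw [abs_le] at this
      linarith [this.2]
    · show resid A q.2.1 q.2.2 i - 1 < 0
      rw [hres i]
      linarith
    · intro t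
      show resid A (p.2.1 + t • (p.2.1 - q.2.1)) (p.2.2 + t • (p.2.2 - q.2.2)) i
          - (p.1 + t * (p.1 - q.1)) = _
      rw [resid_affine]
      ring
  have key2 : (fun r : ℝ × (Fin m → ℝ) × (Fin n → ℝ) =>
      -resid A r.2.1 r.2.2 i - r.1) p < 0 := by
    apply strict_at_ri hp hq
    · intro z hz
      have := (hz.2.2.1 i ⟨yw, hywF, hw1, hw2⟩).2
      rw [abs_le] at this
      linarith [this.1]
    · show -resid A q.2.1 q.2.2 i - 1 < 0
      rw [hres i]
      linarith
    · intro t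
      show -resid A (p.2.1 + t • (p.2.1 - q.2.1)) (p.2.2 + t • (p.2.2 - q.2.2)) i
          - (p.1 + t * (p.1 - q.1)) = _
      rw [resid_affine]
      ring
  simp only at key1 key2
  rw [abs_lt]
  constructor <;> linarith

end Aux

theorem stmt11 {m n : ℕ} (A : Matrix (Fin m) (Fin n) ℝ) (hrank : A.rank = m)
    (F F' : Set (Fin m → ℝ)) (hface : IsFaceOf (Ydual A) F) (hne : F.Nonempty)
    (hface' : IsFaceOf (Ydual A) F') (hne' : F'.Nonempty) (hFF : F ≠ F') :
    intrinsicInterior ℝ (SFace A F) ∩ SFace A F' = ∅ := by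
  classical
  rw [Set.eq_empty_iff_forall_notMem]
  rintro p ⟨hpri, hp'⟩
  have hsigns : ¬(Aplus A F = Aplus A F' ∧ Aminus A F = Aminus A F') := by
    rintro ⟨h1, h2⟩
    exact hFF (Set.Subset.antisymm
      (face_eq_of_signs A hface hne hface' hne' h1 h2)
      (face_eq_of_signs A hface' hne' hface hne h1.symm h2.symm))
  have hex : (∃ i, (i ∈ Aplus A F ∧ i ∉ Aplus A F') ∨ (i ∈ Aplus A F' ∧ i ∉ Aplus A F))
      ∨ (∃ i, (i ∈ Aminus A F ∧ i ∉ Aminus A F') ∨ (i ∈ Aminus A F' ∧ i ∉ Aminus A F)) := by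
    by_contra hc
    push_neg at hc
    obtain ⟨hc1, hc2⟩ := hc
    apply hsigns
    constructor
    · ext i
      have := hc1 i
      tauto
    · ext i
      have := hc2 i
      tauto
  rcases hex with ⟨i, hi | hi⟩ | ⟨i, hi | hi⟩
  · -- i ∈ P, i ∉ P'
    have hpos : 0 < p.2.2 i := Hplus hface hne hi.1 hpri
    by_cases him' : i ∈ Aminus A F'
    · have := (hp'.2.2.2 i him').1
      linarith
    · have hiZ' : i ∈ Azero A F' := face_cover A hface' hne' i hi.2 him'
      have := (hp'.2.2.1 i hiZ').1
      linarith
  · -- i ∈ P', i ∉ P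
    by_cases him : i ∈ Aminus A F
    · have hneg : p.2.2 i < 0 := Hminus hface hne him hpri
      have := (hp'.2.1 i hi.1).1
      linarith
    · have hiZ : i ∈ Azero A F := face_cover A hface hne i hi.2 him
      have habs : |resid A p.2.1 p.2.2 i| < p.1 := Hzero hface hiZ hpri
      have heq : resid A p.2.1 p.2.2 i = p.1 := (hp'.2.1 i hi.1).2
      rw [heq] at habs
      linarith [le_abs_self p.1]
  · -- i ∈ M, i ∉ M'
    have hneg : p.2.2 i < 0 := Hminus hface hne hi.1 hpri
    by_cases hip' : i ∈ Aplus A F'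
    · have := (hp'.2.1 i hip').1
      linarith
    · have hiZ' : i ∈ Azero A F' := face_cover A hface' hne' i hip' hi.2
      have := (hp'.2.2.1 i hiZ').1
      linarith
  · -- i ∈ M', i ∉ M
    by_cases hip : i ∈ Aplus A F
    · have hpos : 0 < p.2.2 i := Hplus hface hne hip hpri
      have := (hp'.2.2.2 i hi.1).1
      linarith
    · have hiZ : i ∈ Azero A F := face_cover A hface hne i hip hi.2
      have habs : |resid A p.2.1 p.2.2 i| < p.1 := Hzero hface hiZ hpri
      have heq : resid A p.2.1 p.2.2 i = -p.1 := (hp'.2.2.2 i hi.1).2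
      rw [heq, abs_neg] at habs
      linarith [le_abs_self p.1]
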